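/- Let G be a finite simple connected nontrivial graph. The LCM lattice of the edge ideal I(G) is upper semimodular if and only if G has no two disjoint edges, if and only if G is isomorphic to the 3-cycle C3 or a star graph St_n for some n ≥ 2. -/

import Mathlib

/-!
If edges pairwise meet, every nonempty element of the LCM lattice (a union of edges) is a
vertex cover, so two nonempty elements intersect and a cover relation `x ⋖ y` with `x ≠ ⊥`
adds exactly one vertex. Hence `rk S = |S| - 1` (and `rk ⊥ = 0`), and semimodularity reduces to
`|x ∪ y| + |x ∩ y| = |x| + |y|`. Conversely, in a connected graph two disjoint edges yield a
path `a - b - c - d`; the edges `ab` and `cd` then have meet `⊥` and join `{a, b, c, d}`, which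
lies three covers above `⊥` along `ab ⋖ abc ⋖ abcd`, violating semimodularity.
Finally, a connected graph whose edges pairwise meet either has a vertex on every edge (a star)
or contains a triangle and no further vertex (`C₃`).
-/

/-- A finset of vertices is a union of edges of `G` if every vertex in it has a
neighbor in it. -/
def IsUnionOfEdges {V : Type*} (G : SimpleGraph V) (S : Finset V) : Prop :=
  ∀ v ∈ S, ∃ w ∈ S, G.Adj v w

/-- The LCM lattice of the edge ideal `I(G)`, ordered by inclusion. -/
abbrev EdgeLcmLattice {V : Type*} (G : SimpleGraph V) : Type _ :=
  {S : Finset V // IsUnionOfEdges G S}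

/-- The largest union-of-edges subset of a set `X` of vertices: the meet of elements
`x, y` of the LCM lattice is `core G (x ∩ y)`. -/
def core {V : Type*} [DecidableEq V] (G : SimpleGraph V) [DecidableRel G.Adj]
    (X : Finset V) : Finset V :=
  X.filter fun v => ∃ w ∈ X, G.Adj v w

/-- The LCM lattice of `I(G)` is (graded and) upper semimodular:
`rk x + rk y ≥ rk (x ⊓ y) + rk (x ⊔ y)`, where the join of `x` and `y` is `x ∪ y` and
the meet is `core G (x ∩ y)`. -/
def IsUpperSemimodularEdgeLattice {V : Type*} [DecidableEq V] (G : SimpleGraph V)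
    [DecidableRel G.Adj] : Prop :=
  ∃ ρ : EdgeLcmLattice G → ℤ,
    (∀ x y : EdgeLcmLattice G, x < y → ρ x < ρ y) ∧
    (∀ x y : EdgeLcmLattice G, x ⋖ y → ρ y = ρ x + 1) ∧
    (∀ x y z w : EdgeLcmLattice G,
      (z : Finset V) = core G ((x : Finset V) ∩ (y : Finset V)) →
      (w : Finset V) = (x : Finset V) ∪ (y : Finset V) →
      ρ z + ρ w ≤ ρ x + ρ y)

/-- The star graph on `n` vertices: vertex `0` is joined to all other vertices. -/
def starGraph (n : ℕ) : SimpleGraph (Fin n) :=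
  SimpleGraph.fromRel fun a _ => (a : ℕ) = 0


namespace SimpleGraph

variable {V : Type*} {G : SimpleGraph V}

def EdgesPairwiseMeet (G : SimpleGraph V) : Prop :=
  ∀ ⦃a b c d : V⦄, G.Adj a b → G.Adj c d → a = c ∨ a = d ∨ b = c ∨ b = d

theorem edgesPairwiseMeet_iff : G.EdgesPairwiseMeet ↔
    ¬ ∃ a b c d : V, G.Adj a b ∧ G.Adj c d ∧ a ≠ c ∧ a ≠ d ∧ b ≠ c ∧ b ≠ d := by
  simp only [EdgesPairwiseMeet, not_exists, not_and, not_not]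
  refine forall₄_congr fun a b c d => ?_
  tauto

theorem EdgesPairwiseMeet.of_iso {W : Type*} {H : SimpleGraph W} (f : G ≃g H)
    (hH : H.EdgesPairwiseMeet) : G.EdgesPairwiseMeet := by
  intro a b c d hab hcd
  simpa only [f.injective.eq_iff] using hH (f.map_adj_iff.2 hab) (f.map_adj_iff.2 hcd)

theorem edgesPairwiseMeet_of_forall_adj (z : V) (hz : ∀ ⦃a b⦄, G.Adj a b → a = z ∨ b = z) :
    G.EdgesPairwiseMeet := by
  intro a b c d hab hcd
  rcases hz hab with rfl | rfl <;> rcases hz hcd with rfl | rfl <;> simp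

theorem edgesPairwiseMeet_starGraph (r : V) : (starGraph r).EdgesPairwiseMeet :=
  edgesPairwiseMeet_of_forall_adj r fun _ _ h => (starGraph_adj.1 h).2

theorem edgesPairwiseMeet_top_fin_three : (⊤ : SimpleGraph (Fin 3)).EdgesPairwiseMeet := by
  unfold EdgesPairwiseMeet
  decide

theorem exists_path_four_of_walk {a b c d : V} (p : G.Walk b c) (hab : G.Adj a b)
    (hcd : G.Adj c d) (hac : a ≠ c) (had : a ≠ d) (hbc : b ≠ c) (hbd : b ≠ d) :
    ∃ a b c d : V, G.Adj a b ∧ G.Adj b c ∧ G.Adj c d ∧ a ≠ c ∧ a ≠ d ∧ b ≠ d := by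
  induction p generalizing a with
  | nil => exact absurd rfl hbc
  | @cons b v c hbv q ih =>
    by_cases hvc : v = c
    · subst hvc
      exact ⟨a, b, v, d, hab, hbv, hcd, hac, had, hbd⟩
    by_cases hvd : v = d
    · subst hvd
      exact ⟨a, b, v, c, hab, hbv, hcd.symm, had, hac, hbc⟩
    exact ih hbv hcd hbc hbd hvc hvd

theorem Preconnected.exists_path_four (hconn : G.Preconnected) (hG : ¬ G.EdgesPairwiseMeet) :
    ∃ a b c d : V, G.Adj a b ∧ G.Adj b c ∧ G.Adj c d ∧ a ≠ c ∧ a ≠ d ∧ b ≠ d := by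
  obtain ⟨a, b, c, d, hab, hcd, hac, had, hbc, hbd⟩ := not_not.1 (edgesPairwiseMeet_iff.not.1 hG)
  exact exists_path_four_of_walk (hconn b c).some hab hcd hac had hbc hbd

theorem Preconnected.exists_adj_of_ne (hconn : G.Preconnected) {x y : V} (hxy : x ≠ y) :
    ∃ w, G.Adj x w := by
  obtain ⟨p⟩ := hconn x y
  exact ⟨_, p.adj_snd (p.not_nil_of_ne hxy)⟩

theorem Preconnected.eq_starGraph (hconn : G.Preconnected) {z : V}
    (hz : ∀ ⦃a b⦄, G.Adj a b → a = z ∨ b = z) : G = starGraph z := by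
  have hadj : ∀ x, x ≠ z → G.Adj x z := fun x hxz => by
    obtain ⟨w, hxw⟩ := hconn.exists_adj_of_ne hxz
    rcases hz hxw with rfl | rfl
    exacts [absurd rfl hxz, hxw]
  ext x y
  rw [starGraph_adj]
  refine ⟨fun h => ⟨h.ne, hz h⟩, ?_⟩
  rintro ⟨hxy, rfl | rfl⟩
  exacts [(hadj y hxy.symm).symm, hadj x hxy]

def Iso.starGraph {W : Type*} (e : V ≃ W) (r : V) :
    SimpleGraph.starGraph r ≃g SimpleGraph.starGraph (e r) :=
  ⟨e, by simp⟩

theorem EdgesPairwiseMeet.exists_adj_ne (hG : G.EdgesPairwiseMeet) {u v p q : V}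
    (huv : G.Adj u v) (hpq : G.Adj p q) (hpu : p ≠ u) (hqu : q ≠ u) : ∃ w, G.Adj v w ∧ w ≠ u := by
  rcases hG hpq huv with rfl | rfl | rfl | rfl
  · exact absurd rfl hpu
  · exact ⟨q, hpq, hqu⟩
  · exact absurd rfl hqu
  · exact ⟨p, hpq.symm, hpu⟩

theorem EdgesPairwiseMeet.exists_common_neighbor (hG : G.EdgesPairwiseMeet) {u v : V}
    (huv : G.Adj u v) (hu : ¬ ∀ ⦃a b⦄, G.Adj a b → a = u ∨ b = u)
    (hv : ¬ ∀ ⦃a b⦄, G.Adj a b → a = v ∨ b = v) : ∃ w, G.Adj u w ∧ G.Adj v w := by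
  push Not at hu hv
  obtain ⟨p, q, hpq, hpu, hqu⟩ := hu
  obtain ⟨r, s, hrs, hrv, hsv⟩ := hv
  obtain ⟨w, hvw, hwu⟩ := hG.exists_adj_ne huv hpq hpu hqu
  obtain ⟨x, hux, hxv⟩ := hG.exists_adj_ne huv.symm hrs hrv hsv
  obtain rfl : w = x := by
    rcases hG hvw hux with h | h | h | h
    · exact absurd h huv.ne'
    · exact absurd h.symm hxv
    · exact absurd h hwu
    · exact h
  exact ⟨w, hux, hvw⟩

theorem EdgesPairwiseMeet.eq_or_eq_or_eq_of_adj (hG : G.EdgesPairwiseMeet)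
    (hconn : G.Preconnected) {u v w : V} (huv : G.Adj u v) (huw : G.Adj u w) (hvw : G.Adj v w)
    (x : V) : x = u ∨ x = v ∨ x = w := by
  by_contra! hx
  obtain ⟨y, hxy⟩ := hconn.exists_adj_of_ne hx.1
  -- `y` would have to lie on all three sides of the triangle
  grind [hG hxy huv, hG hxy huw, hG hxy hvw, huv.ne, huw.ne, hvw.ne]

theorem nonempty_iso_top_fin_three [Fintype V] {u v w : V} (huv : G.Adj u v) (huw : G.Adj u w)
    (hvw : G.Adj v w) (hcover : ∀ x, x = u ∨ x = v ∨ x = w) :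
    Nonempty (G ≃g (⊤ : SimpleGraph (Fin 3))) := by
  have hcard : Fintype.card V = 3 := by
    classical
    rw [← Finset.card_univ]
    exact Finset.card_eq_three.2 ⟨u, v, w, huv.ne, huw.ne, hvw.ne, by ext x; simpa using hcover x⟩
  obtain rfl : G = ⊤ := by
    ext x y
    rw [top_adj]
    refine ⟨Adj.ne, fun hxy => ?_⟩
    rcases hcover x with rfl | rfl | rfl <;> rcases hcover y with rfl | rfl | rfl <;>
      first | exact absurd rfl hxy | assumption | exact Adj.symm ‹_›
  exact ⟨Iso.completeGraph (Fintype.equivFinOfCardEq hcard)⟩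

end SimpleGraph

theorem starGraph_eq_starGraph_zero {n : ℕ} (hn : 0 < n) :
    starGraph n = SimpleGraph.starGraph (⟨0, hn⟩ : Fin n) := by
  ext a b
  simp [starGraph, Fin.ext_iff]

theorem nonempty_iso_starGraph_card {V : Type*} [Fintype V] {G : SimpleGraph V}
    (hconn : G.Preconnected) {z : V} (hz : ∀ ⦃a b⦄, G.Adj a b → a = z ∨ b = z) :
    Nonempty (G ≃g starGraph (Fintype.card V)) := by
  have hpos : 0 < Fintype.card V := Fintype.card_pos_iff.2 ⟨z⟩
  let e := (Fintype.equivFin V).trans (Equiv.swap (Fintype.equivFin V z) ⟨0, hpos⟩)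
  have hez : e z = ⟨0, hpos⟩ := Equiv.swap_apply_left _ _
  rw [hconn.eq_starGraph hz, starGraph_eq_starGraph_zero hpos, ← hez]
  exact ⟨SimpleGraph.Iso.starGraph e z⟩

theorem nonempty_iso_top_or_starGraph_of_edgesPairwiseMeet {V : Type*} [Fintype V]
    {G : SimpleGraph V} (hG : G.EdgesPairwiseMeet) (hconn : G.Preconnected) {u v : V}
    (huv : G.Adj u v) :
    Nonempty (G ≃g (⊤ : SimpleGraph (Fin 3))) ∨ ∃ n, 2 ≤ n ∧ Nonempty (G ≃g starGraph n) := by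
  have hcard : 2 ≤ Fintype.card V := Fintype.one_lt_card_iff_nontrivial.2 huv.nontrivial
  by_cases hu : ∀ ⦃a b⦄, G.Adj a b → a = u ∨ b = u
  · exact .inr ⟨_, hcard, nonempty_iso_starGraph_card hconn hu⟩
  by_cases hv : ∀ ⦃a b⦄, G.Adj a b → a = v ∨ b = v
  · exact .inr ⟨_, hcard, nonempty_iso_starGraph_card hconn hv⟩
  obtain ⟨w, huw, hvw⟩ := hG.exists_common_neighbor huv hu hv
  exact .inl <| SimpleGraph.nonempty_iso_top_fin_three huv huw hvw <|
    hG.eq_or_eq_or_eq_of_adj hconn huv huw hvw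

theorem edgesPairwiseMeet_of_nonempty_iso {V : Type*} {G : SimpleGraph V}
    (h : Nonempty (G ≃g (⊤ : SimpleGraph (Fin 3))) ∨ ∃ n, 2 ≤ n ∧ Nonempty (G ≃g starGraph n)) :
    G.EdgesPairwiseMeet := by
  rcases h with ⟨⟨f⟩⟩ | ⟨n, hn, ⟨f⟩⟩
  · exact SimpleGraph.edgesPairwiseMeet_top_fin_three.of_iso f
  · rw [starGraph_eq_starGraph_zero (by omega)] at f
    exact (SimpleGraph.edgesPairwiseMeet_starGraph _).of_iso f

section

variable {V : Type*} {G : SimpleGraph V}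

theorem isUnionOfEdges_empty : IsUnionOfEdges G ∅ := by
  simp [IsUnionOfEdges]

theorem isUnionOfEdges_pair [DecidableEq V] {a b : V} (h : G.Adj a b) :
    IsUnionOfEdges G {a, b} := by
  simpa [IsUnionOfEdges] using ⟨h, h.symm⟩

theorem IsUnionOfEdges.insert [DecidableEq V] {S : Finset V} (hS : IsUnionOfEdges G S)
    {u v : V} (hu : u ∈ S) (hvu : G.Adj v u) : IsUnionOfEdges G (insert v S) := by
  intro x hx
  rcases Finset.mem_insert.1 hx with rfl | hx
  · exact ⟨u, Finset.mem_insert_of_mem hu, hvu⟩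
  · obtain ⟨w, hw, hxw⟩ := hS x hx
    exact ⟨w, Finset.mem_insert_of_mem hw, hxw⟩

theorem IsUnionOfEdges.exists_adj {S : Finset V} (hS : IsUnionOfEdges G S) (hne : S.Nonempty) :
    ∃ a ∈ S, ∃ b ∈ S, G.Adj a b := by
  obtain ⟨a, ha⟩ := hne
  exact ⟨a, ha, hS a ha⟩

theorem IsUnionOfEdges.two_le_card {S : Finset V} (hS : IsUnionOfEdges G S) (hne : S.Nonempty) :
    2 ≤ S.card := by
  obtain ⟨a, ha, b, hb, hab⟩ := hS.exists_adj hne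
  exact Finset.one_lt_card.2 ⟨a, ha, b, hb, hab.ne⟩

theorem IsUnionOfEdges.mem_or_mem (hG : G.EdgesPairwiseMeet) {S : Finset V}
    (hS : IsUnionOfEdges G S) (hne : S.Nonempty) {a b : V} (hab : G.Adj a b) : a ∈ S ∨ b ∈ S := by
  obtain ⟨c, hc, d, hd, hcd⟩ := hS.exists_adj hne
  rcases hG hab hcd with rfl | rfl | rfl | rfl <;> simp [*]

theorem IsUnionOfEdges.inter_nonempty [DecidableEq V] (hG : G.EdgesPairwiseMeet)
    {S T : Finset V} (hS : IsUnionOfEdges G S) (hT : IsUnionOfEdges G T) (hSne : S.Nonempty)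
    (hTne : T.Nonempty) : (S ∩ T).Nonempty := by
  obtain ⟨a, ha, b, hb, hab⟩ := hS.exists_adj hSne
  rcases hT.mem_or_mem hG hTne hab with h | h
  exacts [⟨a, Finset.mem_inter.2 ⟨ha, h⟩⟩, ⟨b, Finset.mem_inter.2 ⟨hb, h⟩⟩]

namespace EdgeLcmLattice

theorem bot_covBy_pair [DecidableEq V] {a b : V} (hab : G.Adj a b) :
    (⟨∅, isUnionOfEdges_empty⟩ : EdgeLcmLattice G) ⋖ ⟨{a, b}, isUnionOfEdges_pair hab⟩ := by
  refine ⟨Finset.empty_ssubset.2 ⟨a, by simp⟩, fun m hm₁ hm₂ => ?_⟩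
  have h2 := m.2.two_le_card (Finset.empty_ssubset.1 hm₁)
  have := Finset.card_lt_card hm₂
  rw [Finset.card_pair hab.ne] at this
  omega

theorem covBy_insert [DecidableEq V] {x : EdgeLcmLattice G} {u v : V} (hv : v ∉ x.1)
    (hu : u ∈ x.1) (hvu : G.Adj v u) : x ⋖ ⟨insert v x.1, x.2.insert hu hvu⟩ :=
  CovBy.of_image (OrderEmbedding.subtype _) (Finset.covBy_insert hv)

theorem card_eq_two_of_covBy [DecidableEq V] {x y : EdgeLcmLattice G} (h : x ⋖ y)
    (hx : x.1 = ∅) : y.1.card = 2 := by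
  obtain ⟨v, hv, -⟩ := Finset.exists_of_ssubset h.lt
  obtain ⟨a, ha, b, hb, hab⟩ := y.2.exists_adj ⟨v, hv⟩
  have hxe : x ≤ ⟨{a, b}, isUnionOfEdges_pair hab⟩ := by
    simp [← Subtype.coe_le_coe, hx]
  have hey : ⟨{a, b}, isUnionOfEdges_pair hab⟩ ≤ y := by
    simp [← Subtype.coe_le_coe, Finset.insert_subset_iff, ha, hb]
  rcases h.eq_or_eq hxe hey with hxe | hey
  · simpa [hx] using congrArg (a ∈ ·.1) hxe
  · rw [← hey, Finset.card_pair hab.ne]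

theorem eq_insert_of_covBy [DecidableEq V] {x y : EdgeLcmLattice G} (h : x ⋖ y) {u v : V}
    (hv : v ∈ y.1) (hvx : v ∉ x.1) (hu : u ∈ x.1) (hvu : G.Adj v u) : y.1 = insert v x.1 := by
  have hx := covBy_insert hvx hu hvu
  have hle : (⟨insert v x.1, x.2.insert hu hvu⟩ : EdgeLcmLattice G) ≤ y :=
    Finset.insert_subset hv h.le
  exact congrArg Subtype.val ((h.eq_or_eq hx.le hle).resolve_left hx.lt.ne').symm

theorem card_eq_add_one_of_covBy [DecidableEq V] (hG : G.EdgesPairwiseMeet)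
    {x y : EdgeLcmLattice G} (h : x ⋖ y) (hx : x.1.Nonempty) : y.1.card = x.1.card + 1 := by
  obtain ⟨v, hvy, hvx⟩ := Finset.exists_of_ssubset h.lt
  obtain ⟨w, -, hvw⟩ := y.2 v hvy
  have hwx : w ∈ x.1 := (x.2.mem_or_mem hG hx hvw).resolve_left hvx
  rw [eq_insert_of_covBy h hvy hvx hwx hvw, Finset.card_insert_of_notMem hvx]

end EdgeLcmLattice

open EdgeLcmLattice in
theorem isUpperSemimodularEdgeLattice_of_edgesPairwiseMeet [DecidableEq V] [DecidableRel G.Adj]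
    (hG : G.EdgesPairwiseMeet) : IsUpperSemimodularEdgeLattice G := by
  refine ⟨fun x => max ((x.1.card : ℤ) - 1) 0, fun x y hxy => ?_, fun x y h => ?_,
    fun x y z w hz hw => ?_⟩
  · dsimp only
    obtain ⟨v, hv, -⟩ := Finset.exists_of_ssubset hxy
    have := y.2.two_le_card ⟨v, hv⟩
    have := Finset.card_lt_card hxy
    omega
  · dsimp only
    rcases x.1.eq_empty_or_nonempty with hx | hx
    · have := card_eq_two_of_covBy h hx
      simp [hx, this]
    · have := card_eq_add_one_of_covBy hG h hx
      have := hx.card_pos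
      omega
  · dsimp only
    have hzc : z.1.card ≤ (x.1 ∩ y.1).card := hz ▸ Finset.card_le_card (Finset.filter_subset _ _)
    have hwc := hw ▸ Finset.card_union_add_card_inter x.1 y.1
    have hxc := Finset.card_le_card (Finset.inter_subset_left : x.1 ∩ y.1 ⊆ x.1)
    have hyc := Finset.card_le_card (Finset.inter_subset_right : x.1 ∩ y.1 ⊆ y.1)
    have hmeet : x.1.card = 0 ∨ y.1.card = 0 ∨ 0 < (x.1 ∩ y.1).card := by
      rcases x.1.eq_empty_or_nonempty with hx | hx
      · simp [hx]
      rcases y.1.eq_empty_or_nonempty with hy | hy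
      · simp [hy]
      exact .inr (.inr (Finset.card_pos.2 (x.2.inter_nonempty hG y.2 hx hy)))
    omega

open EdgeLcmLattice in
theorem not_isUpperSemimodularEdgeLattice_of_path [DecidableEq V] [DecidableRel G.Adj]
    {a b c d : V} (hab : G.Adj a b) (hbc : G.Adj b c) (hcd : G.Adj c d) (hac : a ≠ c)
    (had : a ≠ d) (hbd : b ≠ d) : ¬ IsUpperSemimodularEdgeLattice G := by
  rintro ⟨ρ, -, hcov, hsm⟩
  let bot : EdgeLcmLattice G := ⟨∅, isUnionOfEdges_empty⟩
  let e₁ : EdgeLcmLattice G := ⟨{a, b}, isUnionOfEdges_pair hab⟩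
  let e₂ : EdgeLcmLattice G := ⟨{c, d}, isUnionOfEdges_pair hcd⟩
  have hc : c ∉ e₁.1 := by simp [e₁, hac.symm, hbc.ne']
  let t₁ : EdgeLcmLattice G := ⟨insert c e₁.1, e₁.2.insert (by simp [e₁]) hbc.symm⟩
  have hd : d ∉ t₁.1 := by simp [t₁, e₁, hcd.ne', had.symm, hbd.symm]
  let t₂ : EdgeLcmLattice G := ⟨insert d t₁.1, t₁.2.insert (by simp [t₁]) hcd.symm⟩
  -- `e₁, e₂` cover their meet `bot`, but their join `t₂` lies three covers above it
  have h₁ : ρ e₁ = ρ bot + 1 := hcov _ _ (bot_covBy_pair hab)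
  have h₂ : ρ e₂ = ρ bot + 1 := hcov _ _ (bot_covBy_pair hcd)
  have h₃ : ρ t₁ = ρ e₁ + 1 := hcov _ _ (covBy_insert hc (by simp [e₁]) hbc.symm)
  have h₄ : ρ t₂ = ρ t₁ + 1 := hcov _ _ (covBy_insert hd (by simp [t₁]) hcd.symm)
  have h₅ : ρ bot + ρ t₂ ≤ ρ e₁ + ρ e₂ := by
    refine hsm e₁ e₂ bot t₂ ?_ ?_
    · have hdisj : ({a, b} : Finset V) ∩ {c, d} = ∅ := by
        simp [hac, had, hbc.ne, hbd]
      simp [bot, e₁, e₂, hdisj, core]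
    · ext x
      simp only [t₂, t₁, e₁, e₂, Finset.mem_insert, Finset.mem_union, Finset.mem_singleton]
      tauto
  omega

theorem isUpperSemimodularEdgeLattice_iff_edgesPairwiseMeet [DecidableEq V] [DecidableRel G.Adj]
    (hconn : G.Preconnected) : IsUpperSemimodularEdgeLattice G ↔ G.EdgesPairwiseMeet := by
  refine ⟨fun h => by_contra fun hG => ?_, isUpperSemimodularEdgeLattice_of_edgesPairwiseMeet⟩
  obtain ⟨a, b, c, d, hab, hbc, hcd, hac, had, hbd⟩ := hconn.exists_path_four hG
  exact not_isUpperSemimodularEdgeLattice_of_path hab hbc hcd hac had hbd h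

end

theorem usm_iff_no_disjoint_edges_iff_C3_or_star {V : Type*} [Fintype V] [DecidableEq V]
    (G : SimpleGraph V) [DecidableRel G.Adj]
    (hconn : G.Connected) (hnt : ∃ a b : V, G.Adj a b) :
    (IsUpperSemimodularEdgeLattice G ↔
      ¬ ∃ a b c d : V, G.Adj a b ∧ G.Adj c d ∧ a ≠ c ∧ a ≠ d ∧ b ≠ c ∧ b ≠ d) ∧
    (IsUpperSemimodularEdgeLattice G ↔
      (Nonempty (G ≃g (⊤ : SimpleGraph (Fin 3))) ∨
        ∃ n : ℕ, 2 ≤ n ∧ Nonempty (G ≃g starGraph n))) := by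
  obtain ⟨u, v, huv⟩ := hnt
  have h := isUpperSemimodularEdgeLattice_iff_edgesPairwiseMeet hconn.preconnected
  exact ⟨h.trans SimpleGraph.edgesPairwiseMeet_iff,
    h.trans ⟨fun hG => nonempty_iso_top_or_starGraph_of_edgesPairwiseMeet hG hconn.preconnected huv,
      edgesPairwiseMeet_of_nonempty_iso⟩⟩
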